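/- Let Φ be a root system in a finite-dimensional real inner product space E which is simply-laced, i.e. ⟪α, α⟫ = 2 for all α ∈ Φ, and let Q ⊆ E be the root lattice, the additive subgroup of E generated by Φ. If x ∈ Q satisfies ⟪x, x⟫ = 2, then x ∈ Φ. -/

import Mathlib

open scoped RealInnerProductSpace

/-!
Since `Φ = -Φ`, every `x` in the root lattice is a sum of roots `α₁ + ⋯ + αₖ`.
If `⟪x, x⟫ = 2` then `∑ ⟪x, αᵢ⟫ = 2`, so some `⟪x, αᵢ⟫` is a positive integer; as
`‖x - αᵢ‖² = 4 - 2⟪x, αᵢ⟫ ≥ 0`, either `x = αᵢ` or `⟪x, αᵢ⟫ = 1`. In the latter case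
`y = x - αᵢ` is a shorter sum of roots with `⟪y, y⟫ = 2`, hence a root by induction, and
`⟪y, αᵢ⟫ = -1`, so `x = s_{αᵢ}(y)` is a root.
-/

/-- A root system in a real inner product space `E`. -/
def IsRootSystem {E : Type*} [NormedAddCommGroup E] [InnerProductSpace ℝ E]
    (Φ : Set E) : Prop :=
  Φ.Finite ∧ (0 : E) ∉ Φ ∧
    (∀ α ∈ Φ, ∀ β ∈ Φ, ∃ n : ℤ, 2 * ⟪β, α⟫ / ⟪α, α⟫ = (n : ℝ)) ∧
    (∀ α ∈ Φ, ∀ β ∈ Φ, β - (2 * ⟪β, α⟫ / ⟪α, α⟫) • α ∈ Φ)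

theorem eq_or_inner_eq_one_of_inner_self_eq_two {E : Type*} [NormedAddCommGroup E]
    [InnerProductSpace ℝ E] {x a : E} (hx : ⟪x, x⟫ = 2) (ha : ⟪a, a⟫ = 2) {n : ℤ}
    (hn : ⟪x, a⟫ = n) (hpos : 0 < n) : x = a ∨ ⟪x, a⟫ = 1 := by
  have hsub : ⟪x - a, x - a⟫ = 4 - 2 * n := by
    rw [inner_sub_sub_self, hx, ha, real_inner_comm x a, hn]; ring
  have hle : n ≤ 2 := by
    have := real_inner_self_nonneg (x := x - a)
    exact_mod_cast (by linarith : (n : ℝ) ≤ 2)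
  obtain rfl | rfl : n = 1 ∨ n = 2 := by omega
  · exact .inr (by exact_mod_cast hn)
  · left
    rw [← sub_eq_zero, ← inner_self_eq_zero (𝕜 := ℝ), hsub]
    norm_num

namespace IsRootSystem

variable {E : Type*} [NormedAddCommGroup E] [InnerProductSpace ℝ E] {Φ : Set E}

theorem neg_mem (hΦ : IsRootSystem Φ) {α : E} (hα : α ∈ Φ) : -α ∈ Φ := by
  have hαα : ⟪α, α⟫ ≠ 0 := by
    rw [inner_self_ne_zero]
    exact ne_of_mem_of_not_mem hα hΦ.2.1
  convert hΦ.2.2.2 α hα α hα using 1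
  rw [mul_div_assoc, div_self hαα]
  module

theorem toAddSubmonoid_closure (hΦ : IsRootSystem Φ) :
    (AddSubgroup.closure Φ).toAddSubmonoid = AddSubmonoid.closure Φ := by
  rw [AddSubgroup.closure_toAddSubmonoid, Set.union_eq_self_of_subset_right]
  exact fun α hα => by simpa using hΦ.neg_mem hα

theorem exists_int_inner_eq (hΦ : IsRootSystem Φ) (hsl : ∀ α ∈ Φ, ⟪α, α⟫ = 2)
    {α β : E} (hα : α ∈ Φ) (hβ : β ∈ Φ) : ∃ n : ℤ, ⟪β, α⟫ = n := by
  obtain ⟨n, hn⟩ := hΦ.2.2.1 α hα β hβ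
  exact ⟨n, by rw [← hn, hsl α hα]; ring⟩

theorem exists_int_inner_eq_of_mem_closure (hΦ : IsRootSystem Φ) (hsl : ∀ α ∈ Φ, ⟪α, α⟫ = 2)
    {α x : E} (hα : α ∈ Φ) (hx : x ∈ AddSubgroup.closure Φ) : ∃ n : ℤ, ⟪x, α⟫ = n := by
  induction hx using AddSubgroup.closure_induction with
  | mem β hβ => exact hΦ.exists_int_inner_eq hsl hα hβ
  | zero => exact ⟨0, by simp⟩
  | add x y _ _ hx hy =>
    obtain ⟨m, hm⟩ := hx
    obtain ⟨n, hn⟩ := hy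
    exact ⟨m + n, by rw [inner_add_left, hm, hn]; push_cast; ring⟩
  | neg x _ hx =>
    obtain ⟨n, hn⟩ := hx
    exact ⟨-n, by rw [inner_neg_left, hn]; push_cast; ring⟩

theorem add_mem_of_inner_eq_neg_one (hΦ : IsRootSystem Φ) (hsl : ∀ α ∈ Φ, ⟪α, α⟫ = 2)
    {α β : E} (hα : α ∈ Φ) (hβ : β ∈ Φ) (h : ⟪β, α⟫ = -1) : β + α ∈ Φ := by
  convert hΦ.2.2.2 α hα β hβ using 1
  rw [h, hsl α hα]
  module

theorem list_sum_mem_of_inner_self_eq_two (hΦ : IsRootSystem Φ) (hsl : ∀ α ∈ Φ, ⟪α, α⟫ = 2)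
    (l : List E) (hl : ∀ a ∈ l, a ∈ Φ) (h2 : ⟪l.sum, l.sum⟫ = 2) : l.sum ∈ Φ := by
  classical
  set x := l.sum
  have hx_sum : (l.map (⟪x, ·⟫)).sum = 2 := by
    rw [← h2]
    exact (map_list_sum (innerₛₗ ℝ x) l).symm
  obtain ⟨a, hal, hpos⟩ : ∃ a ∈ l, 0 < ⟪x, a⟫ :=
    List.exists_lt_of_sum_lt (fun _ => 0) _ (by simp [hx_sum])
  have haΦ := hl a hal
  have hxΦ : x ∈ AddSubgroup.closure Φ :=
    AddSubgroup.list_sum_mem _ fun b hb => AddSubgroup.subset_closure (hl b hb)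
  obtain ⟨n, hn⟩ := hΦ.exists_int_inner_eq_of_mem_closure hsl haΦ hxΦ
  obtain rfl | hxa := eq_or_inner_eq_one_of_inner_self_eq_two h2 (hsl a haΦ) hn
    (Int.cast_pos.mp (hn ▸ hpos))
  · exact haΦ
  have hy : (l.erase a).sum = x - a := by
    rw [eq_sub_iff_add_eq', List.sum_erase hal]
  have hy2 : ⟪x - a, x - a⟫ = 2 := by
    rw [inner_sub_sub_self, h2, hsl a haΦ, real_inner_comm x a, hxa]; norm_num
  have hyΦ : x - a ∈ Φ := hy ▸ hΦ.list_sum_mem_of_inner_self_eq_two hsl (l.erase a)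
    (fun b hb => hl b (List.mem_of_mem_erase hb)) (hy ▸ hy2)
  have hya : ⟪x - a, a⟫ = -1 := by
    rw [inner_sub_left, hxa, hsl a haΦ]; norm_num
  simpa using hΦ.add_mem_of_inner_eq_neg_one hsl haΦ hyΦ hya
termination_by l.length
decreasing_by classical simpa [hal] using List.length_pos_of_mem hal

end IsRootSystem

theorem mem_of_norm_two_of_mem_rootLattice_general {E : Type*} [NormedAddCommGroup E]
    [InnerProductSpace ℝ E] (Φ : Set E) (hΦ : IsRootSystem Φ)
    (hsl : ∀ α ∈ Φ, ⟪α, α⟫ = 2)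
    (x : E) (hx : x ∈ AddSubgroup.closure Φ) (hx2 : ⟪x, x⟫ = 2) :
    x ∈ Φ := by
  rw [← AddSubgroup.mem_toAddSubmonoid, hΦ.toAddSubmonoid_closure] at hx
  obtain ⟨l, hl, rfl⟩ := AddSubmonoid.exists_list_of_mem_closure hx
  exact hΦ.list_sum_mem_of_inner_self_eq_two hsl l hl hx2

/-- In a simply-laced root system, any vector of the root lattice of squared norm `2`
is a root. -/
theorem mem_of_norm_two_of_mem_rootLattice {E : Type*} [NormedAddCommGroup E]
    [InnerProductSpace ℝ E] [FiniteDimensional ℝ E] (Φ : Set E) (hΦ : IsRootSystem Φ)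
    (hsl : ∀ α ∈ Φ, ⟪α, α⟫ = 2)
    (x : E) (hx : x ∈ AddSubgroup.closure Φ) (hx2 : ⟪x, x⟫ = 2) :
    x ∈ Φ :=
  mem_of_norm_two_of_mem_rootLattice_general Φ hΦ hsl x hx hx2
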